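/- In Sym, the elements Ψ_n defined by n S_n = Σ_{k=1}^{n} S_{n−k} Ψ_k are primitive for the coproduct Δ(S_n) = Σ_{k=0}^n S_k ⊗ S_{n−k}. -/
import Mathlib


open scoped TensorProduct

/-- Noncommutative symmetric functions: the free associative algebra on
`S₁, S₂, …` over `ℚ` (the generator of index `0` is unused). -/
abbrev NSym : Type := FreeAlgebra ℚ ℕ

/-- The complete noncommutative symmetric functions, with `S 0 = 1`. -/
noncomputable def Sgen (n : ℕ) : NSym := if n = 0 then 1 else FreeAlgebra.ι ℚ n

/-- The coproduct of `NSym`, determined by `Δ(S_n) = Σ_{k=0}^n S_k ⊗ S_{n−k}`. -/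
noncomputable def Δ : NSym →ₐ[ℚ] NSym ⊗[ℚ] NSym :=
  FreeAlgebra.lift ℚ fun n : ℕ =>
    ∑ k ∈ Finset.range (n + 1), Sgen k ⊗ₜ[ℚ] Sgen (n - k)

open Finset

lemma Sgen_zero : Sgen 0 = 1 := by simp [Sgen]

lemma delta_Sgen (n : ℕ) :
    Δ (Sgen n) = ∑ k ∈ range (n + 1), Sgen k ⊗ₜ[ℚ] Sgen (n - k) := by
  rcases Nat.eq_zero_or_pos n with h | h
  · subst h
    rw [Sgen_zero, map_one, Finset.sum_range_one, Sgen_zero,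
      Algebra.TensorProduct.one_def]
  · have hne : n ≠ 0 := h.ne'
    have : Sgen n = FreeAlgebra.ι ℚ n := by simp [Sgen, hne]
    rw [this, Δ, FreeAlgebra.lift_ι_apply]

lemma tri_sum {M : Type*} [AddCommMonoid M] (n : ℕ) (f : ℕ → ℕ → M) :
    ∑ j ∈ range (n + 1), ∑ k ∈ Icc 1 j, f j k
      = ∑ k ∈ Icc 1 n, ∑ i ∈ range (n - k + 1), f (k + i) k := by
  rw [Finset.sum_sigma', Finset.sum_sigma']
  refine Finset.sum_nbij' (fun p => ⟨p.2, p.1 - p.2⟩) (fun q => ⟨q.1 + q.2, q.1⟩)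
    ?_ ?_ ?_ ?_ ?_
  · rintro ⟨j, k⟩ hp
    simp only [mem_sigma, mem_range, mem_Icc] at hp ⊢
    omega
  · rintro ⟨k, i⟩ hq
    simp only [mem_sigma, mem_range, mem_Icc] at hq ⊢
    omega
  · rintro ⟨j, k⟩ hp
    simp only [mem_sigma, mem_range, mem_Icc] at hp
    have h : k + (j - k) = j := by omega
    simp only [h]
  · rintro ⟨k, i⟩ _
    have h : k + i - k = i := by omega
    simp only [h]
  · rintro ⟨j, k⟩ hp
    simp only [mem_sigma, mem_range, mem_Icc] at hp
    have h : k + (j - k) = j := by omega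
    rw [h]

lemma swap_sum {M : Type*} [AddCommMonoid M] (n : ℕ) (g : ℕ → ℕ → M) :
    ∑ j ∈ range (n + 1), ∑ k ∈ Icc 1 (n - j), g j k
      = ∑ k ∈ Icc 1 n, ∑ j ∈ range (n - k + 1), g j k := by
  rw [Finset.sum_sigma', Finset.sum_sigma']
  refine Finset.sum_nbij' (fun p => ⟨p.2, p.1⟩) (fun q => ⟨q.2, q.1⟩) ?_ ?_ ?_ ?_ ?_
  · rintro ⟨j, k⟩ hp
    simp only [mem_sigma, mem_range, mem_Icc] at hp ⊢
    omega
  · rintro ⟨k, j⟩ hq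
    simp only [mem_sigma, mem_range, mem_Icc] at hq ⊢
    omega
  · rintro ⟨j, k⟩ _; rfl
  · rintro ⟨k, j⟩ _; rfl
  · rintro ⟨j, k⟩ _; rfl

/-- The `Ψ_n` defined by the Newton recurrence `n S_n = Σ_{k=1}^n S_{n−k} Ψ_k` are
primitive: `Δ(Ψ_n) = Ψ_n ⊗ 1 + 1 ⊗ Ψ_n`. -/
theorem psi_primitive (Ψ : ℕ → NSym)
    (hΨ : ∀ n : ℕ, 1 ≤ n →
      (n : ℚ) • Sgen n = ∑ k ∈ Finset.Icc 1 n, Sgen (n - k) * Ψ k) :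
    ∀ n : ℕ, 1 ≤ n →
      Δ (Ψ n) = Ψ n ⊗ₜ[ℚ] 1 + 1 ⊗ₜ[ℚ] Ψ n := by
  have hΨ' : ∀ m : ℕ, (m : ℚ) • Sgen m = ∑ k ∈ Icc 1 m, Sgen (m - k) * Ψ k := by
    intro m
    rcases Nat.eq_zero_or_pos m with h | h
    · subst h; simp
    · exact hΨ m h
  intro n
  induction n using Nat.strong_induction_on with
  | _ n ih =>
    intro hn
    obtain ⟨m, rfl⟩ : ∃ m, n = m + 1 := ⟨n - 1, by omega⟩
    -- apply Δ to the recurrence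
    have E : ((m + 1 : ℕ) : ℚ) • Δ (Sgen (m + 1))
        = ∑ k ∈ Icc 1 (m + 1), Δ (Sgen (m + 1 - k)) * Δ (Ψ k) := by
      rw [← map_smul, hΨ (m + 1) hn, map_sum]
      simp [map_mul]
    have h0 : Sgen (m + 1 - (m + 1)) = 1 := by
      rw [Nat.sub_self, Sgen_zero]
    have E3 : ((m + 1 : ℕ) : ℚ) • Δ (Sgen (m + 1))
        = (∑ k ∈ Icc 1 m, Δ (Sgen (m + 1 - k)) * (Ψ k ⊗ₜ[ℚ] 1 + 1 ⊗ₜ[ℚ] Ψ k))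
          + Δ (Ψ (m + 1)) := by
      rw [E, Finset.sum_Icc_succ_top (by omega), h0, map_one, one_mul]
      congr 1
      refine Finset.sum_congr rfl fun k hk => ?_
      simp only [mem_Icc] at hk
      rw [ih k (by omega) (by omega)]
    -- the combinatorial identity
    have star : ((m + 1 : ℕ) : ℚ) • Δ (Sgen (m + 1))
        = (∑ k ∈ Icc 1 m, Δ (Sgen (m + 1 - k)) * (Ψ k ⊗ₜ[ℚ] 1 + 1 ⊗ₜ[ℚ] Ψ k))
          + (Ψ (m + 1) ⊗ₜ[ℚ] 1 + 1 ⊗ₜ[ℚ] Ψ (m + 1)) := by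
      have starfull : ((m + 1 : ℕ) : ℚ) • Δ (Sgen (m + 1))
          = ∑ k ∈ Icc 1 (m + 1),
              Δ (Sgen (m + 1 - k)) * (Ψ k ⊗ₜ[ℚ] 1 + 1 ⊗ₜ[ℚ] Ψ k) := by
        set n := m + 1 with hmn
        simp only [delta_Sgen]
        rw [Finset.smul_sum]
        -- split the smul on the left
        have lhs_split : ∑ j ∈ range (n + 1), (n : ℚ) • (Sgen j ⊗ₜ[ℚ] Sgen (n - j))
            = (∑ j ∈ range (n + 1), ((j : ℚ) • Sgen j) ⊗ₜ[ℚ] Sgen (n - j))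
              + ∑ j ∈ range (n + 1), Sgen j ⊗ₜ[ℚ] (((n - j : ℕ) : ℚ) • Sgen (n - j)) := by
          rw [← Finset.sum_add_distrib]
          refine Finset.sum_congr rfl fun j hj => ?_
          simp only [mem_range] at hj
          have hj' : j + (n - j) = n := by omega
          have hcast : ((n : ℕ) : ℚ) = (j : ℚ) + ((n - j : ℕ) : ℚ) := by
            rw [← Nat.cast_add, hj']
          rw [hcast, add_smul, TensorProduct.smul_tmul', TensorProduct.tmul_smul,
            TensorProduct.smul_tmul']
        rw [lhs_split]
        -- rewrite via the recurrence
        have L1 : ∑ j ∈ range (n + 1), ((j : ℚ) • Sgen j) ⊗ₜ[ℚ] Sgen (n - j)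
            = ∑ j ∈ range (n + 1), ∑ k ∈ Icc 1 j,
                (Sgen (j - k) * Ψ k) ⊗ₜ[ℚ] Sgen (n - j) := by
          refine Finset.sum_congr rfl fun j _ => ?_
          rw [hΨ' j, TensorProduct.sum_tmul]
        have L2 : ∑ j ∈ range (n + 1), Sgen j ⊗ₜ[ℚ] (((n - j : ℕ) : ℚ) • Sgen (n - j))
            = ∑ j ∈ range (n + 1), ∑ k ∈ Icc 1 (n - j),
                Sgen j ⊗ₜ[ℚ] (Sgen (n - j - k) * Ψ k) := by
          refine Finset.sum_congr rfl fun j _ => ?_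
          rw [hΨ' (n - j), TensorProduct.tmul_sum]
        rw [L1, L2]
        -- expand the right-hand side
        have R : ∑ k ∈ Icc 1 n,
              (∑ i ∈ range (n - k + 1), Sgen i ⊗ₜ[ℚ] Sgen (n - k - i))
                * (Ψ k ⊗ₜ[ℚ] 1 + 1 ⊗ₜ[ℚ] Ψ k)
            = (∑ k ∈ Icc 1 n, ∑ i ∈ range (n - k + 1),
                (Sgen i * Ψ k) ⊗ₜ[ℚ] Sgen (n - k - i))
              + ∑ k ∈ Icc 1 n, ∑ i ∈ range (n - k + 1),
                Sgen i ⊗ₜ[ℚ] (Sgen (n - k - i) * Ψ k) := by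
          rw [← Finset.sum_add_distrib]
          refine Finset.sum_congr rfl fun k _ => ?_
          rw [mul_add, Finset.sum_mul, Finset.sum_mul, ← Finset.sum_add_distrib,
            ← Finset.sum_add_distrib]
          refine Finset.sum_congr rfl fun i _ => ?_
          rw [Algebra.TensorProduct.tmul_mul_tmul, Algebra.TensorProduct.tmul_mul_tmul,
            mul_one, mul_one]
        rw [R]
        congr 1
        · rw [tri_sum n (fun j k => (Sgen (j - k) * Ψ k) ⊗ₜ[ℚ] Sgen (n - j))]
          refine Finset.sum_congr rfl fun k _ => Finset.sum_congr rfl fun i _ => ?_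
          have h1 : k + i - k = i := by omega
          have h2 : n - (k + i) = n - k - i := by omega
          rw [h1, h2]
        · rw [swap_sum n (fun j k => Sgen j ⊗ₜ[ℚ] (Sgen (n - j - k) * Ψ k))]
          refine Finset.sum_congr rfl fun k _ => Finset.sum_congr rfl fun j _ => ?_
          have h : n - j - k = n - k - j := by omega
          rw [h]
      rw [starfull, Finset.sum_Icc_succ_top (by omega : 1 ≤ m + 1), h0, map_one, one_mul]
    -- conclude
    exact add_left_cancel (E3.symm.trans star)
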